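/- arXiv:2101.11859 — 3 statements merged into one kernel-verified Lean document; each statement's English description precedes it below -/
import Mathlib

section
/- Let Â be a symmetric n×n real matrix with eigenvalues in [−1,1], L = I − Â, μ ∈ [1/2,1), α ∈ (0,2/3), ξ = 1/α − 1, and H ∈ ℝ^{n×f}. The unique minimizer of Z ↦ tr((Z−H)ᵀ(μI+(1−μ)Â)(Z−H)) + ξ·tr(Zᵀ L Z) is Z* = {(μ + 1/α − 1)I + (2 − μ − 1/α)Â}⁻¹ (μI + (1−μ)Â) H, provided the indicated matrix is invertible. -/
/-!
Write `M = μ I + (1 - μ) Â` and `B = (μ + 1/α - 1) I + (2 - μ - 1/α) Â`; since `L = I - Â` and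
`ξ = 1/α - 1`, `B = M + ξ L`. As `M` and `L` are symmetric and `B Z* = M H`, completing the square
gives `obj (Z* + W) = obj Z* + tr(Wᵀ B W)`. The eigenvalues of `B` are
`(μ + 1/α - 1) + (2 - μ - 1/α) λ` for the eigenvalues `λ ∈ [-1, 1]` of `Â`; this affine function of
`λ` is `1` at `λ = 1` and `2μ + 2/α - 3 > 0` at `λ = -1`, so `B` is positive definite, hence
invertible, and `tr(Wᵀ B W) > 0` for `W ≠ 0`.
-/

open Matrix

namespace Matrix

section Spectral

open scoped ComplexOrder

variable {𝕜 n : Type*} [RCLike 𝕜] [Fintype n] [DecidableEq n] {A : Matrix n n 𝕜}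

lemma IsHermitian.smul_one_add_smul_eq (hA : A.IsHermitian) (c d : ℝ) :
    c • (1 : Matrix n n 𝕜) + d • A = (hA.eigenvectorUnitary : Matrix n n 𝕜)
      * diagonal (fun i ↦ ((c + d * hA.eigenvalues i : ℝ) : 𝕜))
      * star (hA.eigenvectorUnitary : Matrix n n 𝕜) := by
  set U := (hA.eigenvectorUnitary : Matrix n n 𝕜)
  have hUU : U * star U = 1 := Unitary.mul_star_self_of_mem hA.eigenvectorUnitary.2
  have hdiag : diagonal (fun i ↦ ((c + d * hA.eigenvalues i : ℝ) : 𝕜))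
      = c • 1 + d • diagonal (RCLike.ofReal ∘ hA.eigenvalues) := by
    ext i j
    rcases eq_or_ne i j with rfl | h <;> simp [*, RCLike.real_smul_eq_coe_mul]
  conv_lhs => rw [hA.spectral_theorem, Unitary.conjStarAlgAut_apply]
  rw [hdiag, mul_add, add_mul, Matrix.mul_smul, Matrix.smul_mul, Matrix.mul_smul, Matrix.smul_mul,
    mul_one, hUU]

lemma IsHermitian.posDef_smul_one_add_smul (hA : A.IsHermitian) {c d : ℝ}
    (h : ∀ i, 0 < c + d * hA.eigenvalues i) : (c • (1 : Matrix n n 𝕜) + d • A).PosDef := by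
  rw [hA.smul_one_add_smul_eq, Matrix.IsUnit.posDef_star_right_conjugate_iff
    Unitary.isUnit_coe]
  exact posDef_diagonal_iff.mpr fun i ↦ RCLike.ofReal_pos.mpr (h i)

end Spectral

variable {n m : Type*} [Fintype n] [Fintype m]

section Quadratic

variable {R : Type*} [CommRing R]

lemma IsSymm.trace_transpose_mul_mul_comm {N : Matrix n n R} (hN : N.IsSymm)
    (X Y : Matrix n m R) : (Xᵀ * N * Y).trace = (Yᵀ * N * X).trace := by
  rw [← trace_transpose (Xᵀ * N * Y)]
  simp [transpose_mul, Matrix.mul_assoc, hN.eq]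

lemma IsSymm.trace_transpose_mul_mul_add {N : Matrix n n R} (hN : N.IsSymm)
    (X W : Matrix n m R) :
    ((X + W)ᵀ * N * (X + W)).trace
      = (Xᵀ * N * X).trace + 2 * (Wᵀ * N * X).trace + (Wᵀ * N * W).trace := by
  simp only [transpose_add, Matrix.add_mul, Matrix.mul_add, trace_add,
    hN.trace_transpose_mul_mul_comm X W]
  ring

lemma trace_transpose_mul_add_smul_mul (W Y : Matrix n m R) (M L : Matrix n n R) (ξ : R) :
    (Wᵀ * (M + ξ • L) * Y).trace = (Wᵀ * M * Y).trace + ξ * (Wᵀ * L * Y).trace := by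
  simp [Matrix.mul_add, Matrix.add_mul, trace_add, trace_smul]

theorem trace_objective_eq_add_of_normal_eq {M L : Matrix n n R} (hM : M.IsSymm)
    (hL : L.IsSymm) (ξ : R) {H Zs : Matrix n m R} (hZs : (M + ξ • L) * Zs = M * H)
    (Z : Matrix n m R) :
    ((Z - H)ᵀ * M * (Z - H)).trace + ξ * (Zᵀ * L * Z).trace
      = ((Zs - H)ᵀ * M * (Zs - H)).trace + ξ * (Zsᵀ * L * Zs).trace
        + ((Z - Zs)ᵀ * (M + ξ • L) * (Z - Zs)).trace := by
  set W := Z - Zs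
  have hcross : (Wᵀ * M * (Zs - H)).trace + ξ * (Wᵀ * L * Zs).trace = 0 := by
    calc (Wᵀ * M * (Zs - H)).trace + ξ * (Wᵀ * L * Zs).trace
        = (Wᵀ * (M + ξ • L) * Zs).trace - (Wᵀ * M * H).trace := by
          rw [trace_transpose_mul_add_smul_mul, Matrix.mul_sub, trace_sub]; ring
      _ = 0 := by rw [Matrix.mul_assoc, hZs, ← Matrix.mul_assoc, sub_self]
  rw [show Z = Zs + W by simp [W], show Zs + W - H = (Zs - H) + W by abel,
    hM.trace_transpose_mul_mul_add, hL.trace_transpose_mul_mul_add,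
    trace_transpose_mul_add_smul_mul]
  linear_combination 2 * hcross

end Quadratic

lemma PosDef.trace_transpose_mul_mul_pos {B : Matrix n n ℝ} (hB : B.PosDef)
    {W : Matrix n m ℝ} (hW : W ≠ 0) : 0 < (Wᵀ * B * W).trace := by
  have hpsd : (Wᵀ * B * W).PosSemidef := by
    simpa [conjTranspose_eq_transpose_of_trivial] using hB.posSemidef.conjTranspose_mul_mul_same W
  refine hpsd.trace_nonneg.lt_of_ne fun h ↦ hW ?_
  have hzero : Wᵀ * B * W = 0 := hpsd.trace_eq_zero_iff.mp h.symm
  classical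
  refine ext_of_mulVec_single fun j ↦ ?_
  rw [zero_mulVec]
  by_contra hx
  have hpos := hB.dotProduct_mulVec_pos hx
  rw [star_mulVec, ← dotProduct_mulVec, mulVec_mulVec, mulVec_mulVec,
    conjTranspose_eq_transpose_of_trivial, hzero, zero_mulVec, dotProduct_zero] at hpos
  exact hpos.false

end Matrix

theorem gnn_lf_unique_minimizer_general (n f : ℕ)
    (A : Matrix (Fin n) (Fin n) ℝ) (hA : A.IsHermitian)
    (heig : ∀ i, hA.eigenvalues i ∈ Set.Icc (-1 : ℝ) 1)
    (L : Matrix (Fin n) (Fin n) ℝ) (hL : L = 1 - A)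
    (μ : ℝ) (hμ : μ ∈ Set.Ico (1 / 2 : ℝ) 1)
    (α : ℝ) (hα : α ∈ Set.Ioo (0 : ℝ) (2 / 3))
    (ξ : ℝ) (hξ : ξ = 1 / α - 1)
    (H : Matrix (Fin n) (Fin f) ℝ)
    (obj : Matrix (Fin n) (Fin f) ℝ → ℝ)
    (hobj : ∀ Z, obj Z =
      ((Z - H)ᵀ * (μ • (1 : Matrix (Fin n) (Fin n) ℝ) + (1 - μ) • A) * (Z - H)).trace
        + ξ * (Zᵀ * L * Z).trace)
    (Zstar : Matrix (Fin n) (Fin f) ℝ)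
    (hZstar : Zstar = ((μ + 1 / α - 1) • (1 : Matrix (Fin n) (Fin n) ℝ)
        + (2 - μ - 1 / α) • A)⁻¹
        * ((μ • (1 : Matrix (Fin n) (Fin n) ℝ) + (1 - μ) • A) * H)) :
    ∀ Z : Matrix (Fin n) (Fin f) ℝ, Z ≠ Zstar → obj Zstar < obj Z := by
  set M : Matrix (Fin n) (Fin n) ℝ := μ • 1 + (1 - μ) • A
  set B : Matrix (Fin n) (Fin n) ℝ := (μ + 1 / α - 1) • 1 + (2 - μ - 1 / α) • A
  have hAsymm : A.IsSymm := isHermitian_iff_isSymm.mp hA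
  have hMsymm : M.IsSymm := (isSymm_one.smul μ).add (hAsymm.smul (1 - μ))
  have hLsymm : L.IsSymm := hL ▸ isSymm_one.sub hAsymm
  have hBML : B = M + ξ • L := by rw [hL, hξ]; module
  have hBpos : B.PosDef := hA.posDef_smul_one_add_smul fun i ↦ by
    obtain ⟨hlow, hhigh⟩ := heig i
    have hinvα : 3 / 2 < 1 / α := by rw [lt_div_iff₀ hα.1]; linarith [hα.2]
    nlinarith [hμ.1]
  have hnormal : (M + ξ • L) * Zstar = M * H := by
    rw [← hBML, hZstar, ← Matrix.mul_assoc, mul_nonsing_inv _ hBpos.det_pos.ne'.isUnit,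
      Matrix.one_mul]
  intro Z hZ
  rw [hobj, hobj, trace_objective_eq_add_of_normal_eq hMsymm hLsymm ξ hnormal Z, ← hBML]
  linarith [hBpos.trace_transpose_mul_mul_pos (sub_ne_zero.mpr hZ)]

/-- GNN-LF closed-form: the unique minimizer of
`Z ↦ tr((Z−H)ᵀ(μI+(1−μ)Â)(Z−H)) + ξ tr(Zᵀ L Z)` is
`Z* = {(μ+1/α−1)I + (2−μ−1/α)Â}⁻¹ (μI+(1−μ)Â) H`, provided the matrix is invertible. -/
theorem gnn_lf_unique_minimizer (n f : ℕ)
    (A : Matrix (Fin n) (Fin n) ℝ) (hA : A.IsHermitian)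
    (heig : ∀ i, hA.eigenvalues i ∈ Set.Icc (-1 : ℝ) 1)
    (L : Matrix (Fin n) (Fin n) ℝ) (hL : L = 1 - A)
    (μ : ℝ) (hμ : μ ∈ Set.Ico (1 / 2 : ℝ) 1)
    (α : ℝ) (hα : α ∈ Set.Ioo (0 : ℝ) (2 / 3))
    (ξ : ℝ) (hξ : ξ = 1 / α - 1)
    (H : Matrix (Fin n) (Fin f) ℝ)
    (hinv : IsUnit ((μ + 1 / α - 1) • (1 : Matrix (Fin n) (Fin n) ℝ)
        + (2 - μ - 1 / α) • A))
    (obj : Matrix (Fin n) (Fin f) ℝ → ℝ)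
    (hobj : ∀ Z, obj Z =
      ((Z - H)ᵀ * (μ • (1 : Matrix (Fin n) (Fin n) ℝ) + (1 - μ) • A) * (Z - H)).trace
        + ξ * (Zᵀ * L * Z).trace)
    (Zstar : Matrix (Fin n) (Fin f) ℝ)
    (hZstar : Zstar = ((μ + 1 / α - 1) • (1 : Matrix (Fin n) (Fin n) ℝ)
        + (2 - μ - 1 / α) • A)⁻¹
        * ((μ • (1 : Matrix (Fin n) (Fin n) ℝ) + (1 - μ) • A) * H)) :
    ∀ Z : Matrix (Fin n) (Fin f) ℝ, Z ≠ Zstar → obj Zstar < obj Z :=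
  gnn_lf_unique_minimizer_general n f A hA heig L hL μ hμ α hα ξ hξ H obj hobj Zstar hZstar
end

section
/- Let Â be a symmetric n×n real matrix with spectral radius at most 1, μ ∈ [1/2,1), α ∈ (0,2/3), and H ∈ ℝ^{n×f}. Define Z^{(0)} = (μ/(1+αμ−α))H + ((1−μ)/(1+αμ−α))ÂH and Z^{(k+1)} = ((1+αμ−2α)/(1+αμ−α))·Â·Z^{(k)} + (αμ/(1+αμ−α))·H + ((α−αμ)/(1+αμ−α))·Â·H. Then Z^{(k)} converges as k → ∞ to {(μ+1/α−1)I + (2−μ−1/α)Â}⁻¹(μI+(1−μ)Â)H. -/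
/-!
The update `Z ↦ c • Â * Z + b` with `c = (1 + αμ - 2α)/(1 + αμ - α)` is a contraction for the
`L²` operator norm: `‖Â‖` is the largest `|λ|` over the eigenvalues of the Hermitian `Â`, so
`‖c • Â‖ ≤ |c| < 1`. By Banach's fixed point theorem the iterates converge to its unique fixed
point. Writing `d = 1 + αμ - α`, the closed-form matrix `M` satisfies `(α/d) • M = 1 - c • Â`,
which makes `M` invertible and `M⁻¹ (μ + (1 - μ)Â) H` a fixed point.
-/

open Matrix Filter
open scoped Matrix.Norms.L2Operator Topology

namespace Matrix

variable {𝕜 m p : Type*} [RCLike 𝕜] [Fintype m] [Fintype p] [DecidableEq m] [DecidableEq p]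

theorem IsHermitian.l2_opNorm_le {n : Type*} [Fintype n] [DecidableEq n] {A : Matrix n n ℝ}
    (hA : A.IsHermitian) {r : ℝ} (hr : 0 ≤ r) (heig : ∀ i, |hA.eigenvalues i| ≤ r) :
    ‖A‖ ≤ r := by
  rw [← cfc_id ℝ A hA.isSelfAdjoint]
  refine norm_cfc_le (𝕜 := ℝ) (p := IsSelfAdjoint) hr ?_
  rw [hA.spectrum_real_eq_range_eigenvalues]
  rintro _ ⟨i, rfl⟩
  exact heig i

theorem isUnit_det_of_smul_eq_one_sub {a : 𝕜} {M B : Matrix m m 𝕜} (hB : ‖B‖ < 1)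
    (hM : a • M = 1 - B) : IsUnit M.det := by
  have h := (isUnit_iff_isUnit_det (a • M)).1 (hM ▸ (Units.oneSub B hB).isUnit)
  rw [det_smul] at h
  exact isUnit_of_mul_isUnit_right h

theorem lipschitzWith_mul_add (B : Matrix m m 𝕜) (C : Matrix m p 𝕜) :
    LipschitzWith ‖B‖₊ fun Z : Matrix m p 𝕜 => B * Z + C :=
  LipschitzWith.of_dist_le_mul fun Z W => by
    simpa [dist_eq_norm, ← Matrix.mul_sub] using l2_opNorm_mul B (Z - W)

theorem tendsto_of_mul_add_recurrence {B : Matrix m m 𝕜} (hB : ‖B‖ < 1) {C Zs : Matrix m p 𝕜}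
    (hZs : B * Zs + C = Zs) {Z : ℕ → Matrix m p 𝕜} (hZ : ∀ k, Z (k + 1) = B * Z k + C) :
    Tendsto Z atTop (𝓝 Zs) := by
  have hf : ContractingWith ‖B‖₊ fun Z : Matrix m p 𝕜 => B * Z + C :=
    ⟨hB, lipschitzWith_mul_add B C⟩
  have hiter : Z = fun k => (fun Z => B * Z + C)^[k] (Z 0) := by
    funext k
    induction k with
    | zero => rfl
    | succ k ih => rw [hZ, ih, Function.iterate_succ_apply']
  rw [hiter, hf.fixedPoint_unique hZs]
  exact hf.tendsto_iterate_fixedPoint _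

end Matrix

namespace GNNLF

variable {μ α : ℝ}

theorem denom_pos (hμ : 0 ≤ μ) (hα₀ : 0 ≤ α) (hα₁ : α < 1) : 0 < 1 + α * μ - α := by
  nlinarith

theorem abs_decay_lt_one (hμ : 1 / 2 ≤ μ) (hα₀ : 0 < α) (hα₁ : α < 1) :
    |(1 + α * μ - 2 * α) / (1 + α * μ - α)| < 1 := by
  have hd : 0 < 1 + α * μ - α := denom_pos (by linarith) hα₀.le hα₁
  rw [abs_div, abs_of_pos hd, div_lt_one hd, abs_lt]
  constructor <;> nlinarith

theorem smul_closedForm_eq_one_sub {R : Type*} [Ring R] [Module ℝ R] (A : R) (hα : α ≠ 0)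
    (hd : 1 + α * μ - α ≠ 0) :
    (α / (1 + α * μ - α)) • ((μ + 1 / α - 1) • (1 : R) + (2 - μ - 1 / α) • A)
      = 1 - ((1 + α * μ - 2 * α) / (1 + α * μ - α)) • A := by
  have h₁ : α / (1 + α * μ - α) * (μ + 1 / α - 1) = 1 := by field_simp; ring
  have h₂ : α / (1 + α * μ - α) * (2 - μ - 1 / α) = -((1 + α * μ - 2 * α) / (1 + α * μ - α)) := by
    field_simp; ring
  rw [smul_add, smul_smul, smul_smul, h₁, h₂, one_smul, neg_smul, ← sub_eq_add_neg]

end GNNLF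

theorem gnn_lf_iter_converges_general (n f : ℕ)
    (A : Matrix (Fin n) (Fin n) ℝ) (hA : A.IsHermitian)
    (heig : ∀ i, |hA.eigenvalues i| ≤ 1)
    (μ : ℝ) (hμ : μ ∈ Set.Ico (1 / 2 : ℝ) 1)
    (α : ℝ) (hα : α ∈ Set.Ioo (0 : ℝ) (2 / 3))
    (H : Matrix (Fin n) (Fin f) ℝ)
    (Z : ℕ → Matrix (Fin n) (Fin f) ℝ)
    (hZ : ∀ k, Z (k + 1) = ((1 + α * μ - 2 * α) / (1 + α * μ - α)) • (A * Z k)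
        + (α * μ / (1 + α * μ - α)) • H
        + ((α - α * μ) / (1 + α * μ - α)) • (A * H)) :
    Tendsto Z atTop (𝓝 (((μ + 1 / α - 1) • (1 : Matrix (Fin n) (Fin n) ℝ)
        + (2 - μ - 1 / α) • A)⁻¹
        * ((μ • (1 : Matrix (Fin n) (Fin n) ℝ) + (1 - μ) • A) * H))) := by
  obtain ⟨hμ, -⟩ := hμ
  obtain ⟨hα₀, hα₁⟩ := hα
  have hd : 0 < 1 + α * μ - α := GNNLF.denom_pos (by linarith) hα₀.le (by linarith)
  set c := (1 + α * μ - 2 * α) / (1 + α * μ - α)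
  set M := (μ + 1 / α - 1) • (1 : Matrix (Fin n) (Fin n) ℝ) + (2 - μ - 1 / α) • A
  have hB : ‖c • A‖ < 1 := by
    rw [norm_smul, Real.norm_eq_abs]
    exact (mul_le_of_le_one_right (abs_nonneg c) (hA.l2_opNorm_le zero_le_one heig)).trans_lt
      (GNNLF.abs_decay_lt_one hμ hα₀ (by linarith))
  have hM : (α / (1 + α * μ - α)) • M = 1 - c • A :=
    GNNLF.smul_closedForm_eq_one_sub A hα₀.ne' hd.ne'
  refine tendsto_of_mul_add_recurrence hB ?_ fun k => by rw [hZ k, smul_mul, add_assoc]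
  have hfix : (1 - c • A) * (M⁻¹ * ((μ • 1 + (1 - μ) • A) * H)) =
      (α * μ / (1 + α * μ - α)) • H + ((α - α * μ) / (1 + α * μ - α)) • (A * H) := by
    rw [← hM, smul_mul, ← Matrix.mul_assoc,
      mul_nonsing_inv M (isUnit_det_of_smul_eq_one_sub hB hM), Matrix.one_mul, Matrix.add_mul,
      smul_mul, smul_mul, Matrix.one_mul]
    module
  rw [← hfix, Matrix.sub_mul, Matrix.one_mul, add_sub_cancel]

/-- GNN-LF-iter converges to GNN-LF-closed. -/
theorem gnn_lf_iter_converges (n f : ℕ)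
    (A : Matrix (Fin n) (Fin n) ℝ) (hA : A.IsHermitian)
    (heig : ∀ i, |hA.eigenvalues i| ≤ 1)
    (μ : ℝ) (hμ : μ ∈ Set.Ico (1 / 2 : ℝ) 1)
    (α : ℝ) (hα : α ∈ Set.Ioo (0 : ℝ) (2 / 3))
    (H : Matrix (Fin n) (Fin f) ℝ)
    (Z : ℕ → Matrix (Fin n) (Fin f) ℝ)
    (hZ0 : Z 0 = (μ / (1 + α * μ - α)) • H + ((1 - μ) / (1 + α * μ - α)) • (A * H))
    (hZ : ∀ k, Z (k + 1) = ((1 + α * μ - 2 * α) / (1 + α * μ - α)) • (A * Z k)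
        + (α * μ / (1 + α * μ - α)) • H
        + ((α - α * μ) / (1 + α * μ - α)) • (A * H)) :
    Tendsto Z atTop (𝓝 (((μ + 1 / α - 1) • (1 : Matrix (Fin n) (Fin n) ℝ)
        + (2 - μ - 1 / α) • A)⁻¹
        * ((μ • (1 : Matrix (Fin n) (Fin n) ℝ) + (1 - μ) • A) * H))) :=
  gnn_lf_iter_converges_general n f A hA heig μ hμ α hα H Z hZ
end

section
/- Let Â be a symmetric n×n real matrix with spectral radius at most 1, L = I − Â, β > 0, α ∈ (0,1], and H ∈ ℝ^{n×f}. Define Z^{(0)} = (1/(αβ+1))H + (β/(αβ+1))LH and Z^{(k+1)} = ((αβ−α+1)/(αβ+1))·Â·Z^{(k)} + (α/(αβ+1))·H + (αβ/(αβ+1))·L·H. Then Z^{(k)} converges as k → ∞ to {(β+1/α)I + (1−β−1/α)Â}⁻¹(I + βL)H. -/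
open Matrix Filter
open scoped Matrix.Norms.L2Operator Topology

/-!
With `c = (αβ - α + 1)/(αβ + 1)` the iteration reads `Z (k+1) = (c • A) * Z k + B`, and
`|c| < 1`, `‖A‖₂ = maxᵢ |λᵢ| ≤ 1` make `c • A` a strict contraction, so the error to any fixed
point is `(c • A)ᵏ` applied to the initial error and tends to zero. Multiplying the limit matrix
by `α/(αβ + 1)` gives exactly `1 - c • A`, invertible by the Neumann series, and solving for the
fixed point gives the closed form.
-/

theorem Matrix.IsHermitian.l2_opNorm_eq_norm_eigenvalues {𝕜 n : Type*} [RCLike 𝕜] [Fintype n]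
    [DecidableEq n] {A : Matrix n n 𝕜} (hA : A.IsHermitian) : ‖A‖ = ‖hA.eigenvalues‖ := by
  conv_lhs => rw [hA.spectral_theorem, Unitary.conjStarAlgAut_apply,
    CStarRing.norm_mul_mem_unitary _ (Unitary.star_mem hA.eigenvectorUnitary.2),
    CStarRing.norm_coe_unitary_mul, l2_opNorm_diagonal]
  simp [Pi.norm_def]

theorem Matrix.IsHermitian.l2_opNorm_le_one {𝕜 n : Type*} [RCLike 𝕜] [Fintype n]
    [DecidableEq n] {A : Matrix n n 𝕜} (hA : A.IsHermitian) (heig : ∀ i, |hA.eigenvalues i| ≤ 1) :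
    ‖A‖ ≤ 1 := by
  rw [hA.l2_opNorm_eq_norm_eigenvalues]
  exact (pi_norm_le_iff_of_nonneg zero_le_one).2 heig

theorem Matrix.tendsto_of_affine_recurrence {R m p : Type*} [Ring R] [TopologicalSpace R]
    [IsTopologicalRing R] [Fintype m] [DecidableEq m] {T : Matrix m m R}
    (hT : Tendsto (T ^ ·) atTop (𝓝 0)) {B Z₀ : Matrix m p R} (hfix : T * Z₀ + B = Z₀)
    {Z : ℕ → Matrix m p R} (hZ : ∀ k, Z (k + 1) = T * Z k + B) : Tendsto Z atTop (𝓝 Z₀) := by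
  have herr : ∀ k, Z k - Z₀ = T ^ k * (Z 0 - Z₀) := by
    intro k
    induction k with
    | zero => simp
    | succ k ih =>
      conv_lhs => rw [hZ, ← hfix]
      rw [add_sub_add_right_eq_sub, ← Matrix.mul_sub, ih, pow_succ', Matrix.mul_assoc]
  have hmul : Continuous fun S : Matrix m m R => S * (Z 0 - Z₀) :=
    continuous_id.matrix_mul continuous_const
  have hlim : Tendsto (fun k => Z k - Z₀) atTop (𝓝 0) := by
    have := (hmul.tendsto 0).comp hT
    rw [Matrix.zero_mul] at this
    exact this.congr fun k => (herr k).symm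
  simpa using hlim.add_const Z₀

theorem Matrix.tendsto_nonsing_inv_mul_of_recurrence {𝕜 m p : Type*} [RCLike 𝕜] [Fintype m]
    [DecidableEq m] {T M : Matrix m m 𝕜} {r : 𝕜} (hT : ‖T‖ < 1) (hM : r • M = 1 - T)
    {C : Matrix m p 𝕜} {Z : ℕ → Matrix m p 𝕜} (hZ : ∀ k, Z (k + 1) = T * Z k + r • C) :
    Tendsto Z atTop (𝓝 (M⁻¹ * C)) := by
  have hdet : IsUnit M.det := by
    have := (isUnit_iff_isUnit_det _).1 (isUnit_one_sub_of_norm_lt_one hT)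
    rw [← hM, det_smul] at this
    exact isUnit_of_mul_isUnit_right this
  have hfix : T * (M⁻¹ * C) + r • C = M⁻¹ * C := by
    rw [← mul_nonsing_inv_cancel_left M C hdet, ← Matrix.smul_mul, hM, Matrix.sub_mul,
      Matrix.one_mul, mul_nonsing_inv_cancel_left M C hdet, add_sub_cancel]
  have hpow : Tendsto (T ^ ·) atTop (𝓝 0) := tendsto_pow_atTop_nhds_zero_of_norm_lt_one hT
  exact tendsto_of_affine_recurrence hpow hfix hZ

theorem gnn_hf_iter_converges_general (n f : ℕ)
    (A : Matrix (Fin n) (Fin n) ℝ) (hA : A.IsHermitian)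
    (heig : ∀ i, |hA.eigenvalues i| ≤ 1)
    (L : Matrix (Fin n) (Fin n) ℝ)
    (β : ℝ) (hβ : 0 < β)
    (α : ℝ) (hα : α ∈ Set.Ioc (0 : ℝ) 1)
    (H : Matrix (Fin n) (Fin f) ℝ)
    (Z : ℕ → Matrix (Fin n) (Fin f) ℝ)
    (hZ : ∀ k, Z (k + 1) = ((α * β - α + 1) / (α * β + 1)) • (A * Z k)
        + (α / (α * β + 1)) • H + (α * β / (α * β + 1)) • (L * H)) :
    Tendsto Z atTop (𝓝 (((β + 1 / α) • (1 : Matrix (Fin n) (Fin n) ℝ)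
        + (1 - β - 1 / α) • A)⁻¹ * ((1 + β • L) * H))) := by
  obtain ⟨hα₀, hα₁⟩ := hα
  have hden : 0 < α * β + 1 := by positivity
  set c := (α * β - α + 1) / (α * β + 1)
  have hc : |c| < 1 := by
    rw [abs_div, abs_of_pos hden, div_lt_one hden, abs_lt]
    constructor <;> nlinarith
  have hcA : ‖c • A‖ < 1 := by
    rw [norm_smul, Real.norm_eq_abs]
    nlinarith [hA.l2_opNorm_le_one heig, abs_nonneg c, norm_nonneg A]
  have hM : (α / (α * β + 1)) • ((β + 1 / α) • 1 + (1 - β - 1 / α) • A) = 1 - c • A := by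
    have h₁ : α / (α * β + 1) * (β + 1 / α) = 1 := by field_simp
    have h₂ : α / (α * β + 1) * (1 - β - 1 / α) = -c := by simp only [c]; field_simp; ring
    rw [smul_add, smul_smul, smul_smul, h₁, h₂, one_smul, neg_smul, ← sub_eq_add_neg]
  refine tendsto_nonsing_inv_mul_of_recurrence hcA hM fun k => ?_
  rw [hZ, Matrix.smul_mul, add_assoc, Matrix.add_mul, Matrix.one_mul, Matrix.smul_mul, smul_add,
    smul_smul, div_mul_eq_mul_div]

/-- GNN-HF-iter converges to GNN-HF-closed. -/
theorem gnn_hf_iter_converges (n f : ℕ)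
    (A : Matrix (Fin n) (Fin n) ℝ) (hA : A.IsHermitian)
    (heig : ∀ i, |hA.eigenvalues i| ≤ 1)
    (L : Matrix (Fin n) (Fin n) ℝ) (hL : L = 1 - A)
    (β : ℝ) (hβ : 0 < β)
    (α : ℝ) (hα : α ∈ Set.Ioc (0 : ℝ) 1)
    (H : Matrix (Fin n) (Fin f) ℝ)
    (Z : ℕ → Matrix (Fin n) (Fin f) ℝ)
    (hZ0 : Z 0 = (1 / (α * β + 1)) • H + (β / (α * β + 1)) • (L * H))
    (hZ : ∀ k, Z (k + 1) = ((α * β - α + 1) / (α * β + 1)) • (A * Z k)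
        + (α / (α * β + 1)) • H + (α * β / (α * β + 1)) • (L * H)) :
    Tendsto Z atTop (𝓝 (((β + 1 / α) • (1 : Matrix (Fin n) (Fin n) ℝ)
        + (1 - β - 1 / α) • A)⁻¹ * ((1 + β • L) * H))) :=
  gnn_hf_iter_converges_general n f A hA heig L β hβ α hα H Z hZ
end
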